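/- arXiv:2406.19767 — 4 statements merged into one kernel-verified Lean document; each statement's English description precedes it below -/
import Mathlib

section
/- Let C^s ∈ ℝ^{n×n} and C^q ∈ ℝ^{m×m} be matrices, and define the 4-tensor L by L_{i,i',j,j'} = (C^s_{i,i'} − C^q_{j,j'})². Then for any T ∈ ℝ^{n×m} and any q ∈ ℝ^m with Tᵀ1_n = q, the tensor-matrix product satisfies L ⊗ T = (C^s ⊙ C^s) T 1_m 1_mᵀ + 1_n qᵀ (C^q ⊙ C^q)ᵀ − 2 C^s T (C^q)ᵀ, where ⊙ denotes the Hadamard (elementwise) product. -/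
/-- closed-form for L ⊗ T with L_{i,i',j,j'} = (Cˢ_{i,i'} − C^q_{j,j'})²,
given column sums Tᵀ1 = q:
(L ⊗ T)_{ij} = ((Cˢ⊙Cˢ) T 1 1ᵀ)_{ij} + (1 qᵀ (C^q⊙C^q)ᵀ)_{ij} − 2 (Cˢ T (C^q)ᵀ)_{ij}. -/
theorem stmt_4 (n m : ℕ) (Cs : Matrix (Fin n) (Fin n) ℝ) (Cq : Matrix (Fin m) (Fin m) ℝ)
    (T : Matrix (Fin n) (Fin m) ℝ) (q : Fin m → ℝ)
    (hq : ∀ j, ∑ i, T i j = q j) :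
    ∀ i j, ∑ i', ∑ j', (Cs i i' - Cq j j') ^ 2 * T i' j'
      = (∑ i', (Cs i i' * Cs i i') * ∑ j', T i' j')
        + (∑ j', q j' * (Cq j j' * Cq j j'))
        - 2 * ∑ i', ∑ j', Cs i i' * T i' j' * Cq j j' := by
  intro i j
  simp only [← hq, Finset.mul_sum, Finset.sum_mul]
  rw [Finset.sum_comm (f := fun j' i' => T i' j' * (Cq j j' * Cq j j'))]
  simp only [← Finset.sum_sub_distrib, ← Finset.sum_add_distrib]
  apply Finset.sum_congr rfl; intro i' _
  apply Finset.sum_congr rfl; intro j' _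
  ring
end

section
/- Let L_{i,i',j,j'} = (C^s_{i,i'} − C^q_{j,j'})² decompose as (C^s_{i,i'})² + (C^q_{j,j'})² − 2 C^s_{i,i'} C^q_{j,j'}. Then for any T ∈ ℝ^{n×m}, the quadratic form satisfies ⟨L ⊗ T, T⟩ = Σ_{i,i'} (C^s_{i,i'})² rᵢ r_{i'} + Σ_{j,j'} (C^q_{j,j'})² cⱼ c_{j'} − 2·trace((C^s T (C^q)ᵀ)ᵀ T), where r = T1 is the vector of row sums and c = Tᵀ1 is the vector of column sums. -/
open Finset


lemma swap_inner {α β γ : Type*} [Fintype α] [Fintype β] [Fintype γ]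
    (f : α → β → γ → ℝ) :
    (∑ a, ∑ b, ∑ c, f a b c) = ∑ a, ∑ c, ∑ b, f a b c :=
  Finset.sum_congr rfl fun _ _ => Finset.sum_comm

/-- quadratic form decomposition
⟨L ⊗ T, T⟩ = Σ (Cˢ)² r rᵀ + Σ (C^q)² c cᵀ − 2 trace((Cˢ T (C^q)ᵀ)ᵀ T). -/
theorem stmt_5 (n m : ℕ) (Cs : Matrix (Fin n) (Fin n) ℝ) (Cq : Matrix (Fin m) (Fin m) ℝ)
    (T : Matrix (Fin n) (Fin m) ℝ)
    (r : Fin n → ℝ) (c : Fin m → ℝ)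
    (hr : ∀ i, r i = ∑ j, T i j) (hc : ∀ j, c j = ∑ i, T i j) :
    ∑ i, ∑ j, (∑ i', ∑ j', (Cs i i' - Cq j j') ^ 2 * T i' j') * T i j
      = (∑ i, ∑ i', (Cs i i') ^ 2 * r i * r i')
        + (∑ j, ∑ j', (Cq j j') ^ 2 * c j * c j')
        - 2 * Matrix.trace ((Cs * T * Cq.transpose).transpose * T) := by
  -- LHS to canonical form
  have eL : (∑ i, ∑ j, (∑ i', ∑ j', (Cs i i' - Cq j j') ^ 2 * T i' j') * T i j)
      = ∑ i, ∑ i', ∑ j, ∑ j', (Cs i i' - Cq j j') ^ 2 * T i' j' * T i j := by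
    simp only [Finset.sum_mul]
    exact Finset.sum_congr rfl fun i _ => Finset.sum_comm
  -- first RHS term
  have e1 : (∑ i, ∑ i', (Cs i i') ^ 2 * r i * r i')
      = ∑ i, ∑ i', ∑ j, ∑ j', (Cs i i') ^ 2 * T i j * T i' j' := by
    refine Finset.sum_congr rfl fun i _ => Finset.sum_congr rfl fun i' _ => ?_
    rw [hr, hr, mul_assoc, Finset.sum_mul_sum]
    simp only [Finset.mul_sum]
    exact Finset.sum_congr rfl fun j _ => Finset.sum_congr rfl fun j' _ => by ring
  -- second RHS term
  have e2 : (∑ j, ∑ j', (Cq j j') ^ 2 * c j * c j')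
      = ∑ i, ∑ i', ∑ j, ∑ j', (Cq j j') ^ 2 * T i j * T i' j' := by
    have : (∑ j, ∑ j', (Cq j j') ^ 2 * c j * c j')
        = ∑ j, ∑ j', ∑ i, ∑ i', (Cq j j') ^ 2 * T i j * T i' j' := by
      refine Finset.sum_congr rfl fun j _ => Finset.sum_congr rfl fun j' _ => ?_
      rw [hc, hc, mul_assoc, Finset.sum_mul_sum]
      simp only [Finset.mul_sum]
      exact Finset.sum_congr rfl fun i _ => Finset.sum_congr rfl fun i' _ => by ring
    rw [this]
    rw [swap_inner]            -- ∑j ∑i ∑j' ∑i'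
    rw [Finset.sum_comm]       -- ∑i ∑j ∑j' ∑i'
    rw [show (∑ i, ∑ j, ∑ j', ∑ i', (Cq j j') ^ 2 * T i j * T i' j')
        = ∑ i, ∑ j, ∑ i', ∑ j', (Cq j j') ^ 2 * T i j * T i' j' from
      Finset.sum_congr rfl fun i _ => swap_inner _]
    exact swap_inner _
  -- trace term
  have e3 : Matrix.trace ((Cs * T * Cq.transpose).transpose * T)
      = ∑ i, ∑ i', ∑ j, ∑ j', Cs i i' * Cq j j' * T i' j' * T i j := by
    simp only [Matrix.trace, Matrix.diag, Matrix.mul_apply, Matrix.transpose_apply,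
      Finset.sum_mul, Finset.mul_sum]
    -- current shape: ∑ j, ∑ i, ∑ j', ∑ i', ...
    rw [Finset.sum_comm]       -- ∑ i, ∑ j, ∑ j', ∑ i'
    rw [show ∀ g : Fin n → Fin m → Fin m → Fin n → ℝ,
        (∑ i, ∑ j, ∑ j', ∑ i', g i j j' i') = ∑ i, ∑ i', ∑ j, ∑ j', g i j j' i' from ?_]
    · refine Finset.sum_congr rfl fun i _ => Finset.sum_congr rfl fun i' _ =>
        Finset.sum_congr rfl fun j _ => Finset.sum_congr rfl fun j' _ => by ring
    · intro g
      rw [show (∑ i, ∑ j, ∑ j', ∑ i', g i j j' i')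
          = ∑ i, ∑ j, ∑ i', ∑ j', g i j j' i' from
        Finset.sum_congr rfl fun i _ => swap_inner _]
      exact swap_inner _
  rw [eL, e1, e2, e3]
  simp only [← Finset.sum_add_distrib, ← Finset.sum_sub_distrib, Finset.mul_sum,
    ← Finset.sum_sub_distrib]
  refine Finset.sum_congr rfl fun i _ => Finset.sum_congr rfl fun i' _ =>
    Finset.sum_congr rfl fun j _ => Finset.sum_congr rfl fun j' _ => by ring
end

section
/- Consider the augmented target distribution q̂ = [qᵀ, 1 − m/n]ᵀ ∈ ℝ^{m+1} with q = (1/n)·1_m, p = (1/n)·1_n, augmented feature cost M̂ = [M, 0_n], and augmented tensor L̂ that vanishes whenever an index equals m+1. Then the map sending T̂ ∈ 𝒯(p, q̂) to its first m columns T is a bijection onto 𝒯_{m/n}(p, q) ∩ {T : Tᵀ1 = q}, and it preserves the objective: (1−α)⟨T̂, M̂⟩ + α⟨L̂ ⊗ T̂, T̂⟩ = (1−α)⟨T, M⟩ + α⟨L ⊗ T, T⟩. Consequently, the minimum of the fused Gromov-Wasserstein objective over 𝒯(p, q̂) equals the minimum of the partial fused Gromov-Wasserstein objective over 𝒯_{m/n}(p,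 q). -/
open scoped BigOperators

/-- Column restriction: keep the first m columns. -/
def restrictCols (n m : ℕ) (That : Matrix (Fin n) (Fin (m + 1)) ℝ) :
    Matrix (Fin n) (Fin m) ℝ := fun i j => That i j.castSucc

/-- The classical transport polytope 𝒯(p, q̂) with p = (1/n)1 and q̂ = [(1/n)1ᵀ, 1 − m/n]ᵀ. -/
def TpolyHat (n m : ℕ) : Set (Matrix (Fin n) (Fin (m + 1)) ℝ) :=
  {That | (∀ i j, 0 ≤ That i j) ∧ (∀ i, ∑ j, That i j = 1 / (n : ℝ)) ∧
    (∀ j, ∑ i, That i j = (Fin.snoc (fun _ : Fin m => 1 / (n : ℝ)) (1 - (m : ℝ) / (n : ℝ)) : Fin (m + 1) → ℝ) j)}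

/-- The partial transport set 𝒯_{m/n}(p, q) with p = (1/n)1_n, q = (1/n)1_m. -/
def Tpartial (n m : ℕ) : Set (Matrix (Fin n) (Fin m) ℝ) :=
  {T | (∀ i j, 0 ≤ T i j) ∧ (∀ i, ∑ j, T i j ≤ 1 / (n : ℝ)) ∧
    (∀ j, ∑ i, T i j ≤ 1 / (n : ℝ)) ∧ ∑ i, ∑ j, T i j = (m : ℝ) / (n : ℝ)}

/-- Augmented feature cost M̂ = [M, 0]. -/
def Mhat (n m : ℕ) (M : Matrix (Fin n) (Fin m) ℝ) : Matrix (Fin n) (Fin (m + 1)) ℝ :=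
  fun i => Fin.snoc (M i) 0

/-- Augmented structure tensor L̂ vanishing whenever a query index is the dummy node. -/
def Lhat (n m : ℕ) (L : Fin n → Fin n → Fin m → Fin m → ℝ) :
    Fin n → Fin n → Fin (m + 1) → Fin (m + 1) → ℝ :=
  fun i i' j j' =>
    if h : (j : ℕ) < m ∧ (j' : ℕ) < m then L i i' ⟨j, h.1⟩ ⟨j', h.2⟩ else 0

/-- Fused Gromov-Wasserstein objective on the augmented problem. -/
def objHat (n m : ℕ) (α : ℝ) (M : Matrix (Fin n) (Fin m) ℝ)
    (L : Fin n → Fin n → Fin m → Fin m → ℝ)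
    (That : Matrix (Fin n) (Fin (m + 1)) ℝ) : ℝ :=
  (1 - α) * (∑ i, ∑ j, That i j * Mhat n m M i j)
    + α * ∑ i, ∑ i', ∑ j, ∑ j', Lhat n m L i i' j j' * That i j * That i' j'

/-- Partial fused Gromov-Wasserstein objective. -/
def objPart (n m : ℕ) (α : ℝ) (M : Matrix (Fin n) (Fin m) ℝ)
    (L : Fin n → Fin n → Fin m → Fin m → ℝ)
    (T : Matrix (Fin n) (Fin m) ℝ) : ℝ :=
  (1 - α) * (∑ i, ∑ j, T i j * M i j)
    + α * ∑ i, ∑ i', ∑ j, ∑ j', L i i' j j' * T i j * T i' j'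

/-!
The dummy column of a plan in `𝒯(p, q̂)` carries exactly the mass missing from each row, so it
is determined by the first `m` columns: dropping it is injective, and conversely every partial
plan is completed by putting the row deficits `1/n - ∑ⱼ T i j` into the new column. Since `L̂`
and `M̂` vanish on that column, the objective only sees the first `m` columns. Finally, in
`𝒯_{m/n}(p, q)` the `m` column sums are each at most `1/n` and add up to `m/n`, so they all
equal `1/n`; the constraint `Tᵀ1 = q` is therefore automatic.
-/

open Finset

lemma eq_of_forall_le_of_sum_eq_card_mul {ι : Type*} [Fintype ι] {f : ι → ℝ} {c : ℝ}
    (hle : ∀ i, f i ≤ c) (hsum : ∑ i, f i = Fintype.card ι * c) (i : ι) : f i = c := by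
  have hsum' : ∑ i, f i = ∑ _i : ι, c := by simp [hsum]
  exact (sum_eq_sum_iff_of_le fun i _ => hle i).mp hsum' i (mem_univ i)

section Transport

variable {n m : ℕ}

lemma Tpartial_colSum_eq {T : Matrix (Fin n) (Fin m) ℝ} (hT : T ∈ Tpartial n m) (j : Fin m) :
    ∑ i, T i j = 1 / (n : ℝ) := by
  obtain ⟨-, -, hcol, htotal⟩ := hT
  refine eq_of_forall_le_of_sum_eq_card_mul hcol ?_ j
  rw [sum_comm, htotal, Fintype.card_fin, mul_one_div]

lemma sum_row_eq_sum_restrictCols_add_last (That : Matrix (Fin n) (Fin (m + 1)) ℝ)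
    (i : Fin n) : ∑ j, That i j = ∑ j, restrictCols n m That i j + That i (Fin.last m) :=
  Fin.sum_univ_castSucc _

lemma restrictCols_mapsTo :
    Set.MapsTo (restrictCols n m) (TpolyHat n m) (Tpartial n m) := by
  rintro That ⟨hnonneg, hrow, hcol⟩
  have hcol' : ∀ j : Fin m, ∑ i, restrictCols n m That i j = 1 / (n : ℝ) := fun j =>
    (hcol j.castSucc).trans (Fin.snoc_castSucc ..)
  refine ⟨fun i j => hnonneg i j.castSucc, fun i => ?_, fun j => (hcol' j).le, ?_⟩
  · have := sum_row_eq_sum_restrictCols_add_last That i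
    linarith [hrow i, hnonneg i (Fin.last m)]
  · refine sum_comm.trans ?_
    rw [sum_congr rfl fun j _ => hcol' j, sum_const, card_univ, Fintype.card_fin,
      nsmul_eq_mul, mul_one_div]

lemma restrictCols_injOn : Set.InjOn (restrictCols n m) (TpolyHat n m) := by
  intro A hA B hB hAB
  funext i j
  induction j using Fin.lastCases with
  | cast j => exact congrFun (congrFun hAB i) j
  | last =>
    have hrow : ∑ j, A i j = ∑ j, B i j := by rw [hA.2.1 i, hB.2.1 i]
    rw [sum_row_eq_sum_restrictCols_add_last, sum_row_eq_sum_restrictCols_add_last, hAB] at hrow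
    exact add_left_cancel hrow

def appendSlackCol (p : ℝ) (T : Matrix (Fin n) (Fin m) ℝ) : Matrix (Fin n) (Fin (m + 1)) ℝ :=
  fun i => Fin.snoc (T i) (p - ∑ j, T i j)

@[simp]
lemma appendSlackCol_castSucc (p : ℝ) (T : Matrix (Fin n) (Fin m) ℝ) (i : Fin n) (j : Fin m) :
    appendSlackCol p T i j.castSucc = T i j :=
  Fin.snoc_castSucc ..

@[simp]
lemma appendSlackCol_last (p : ℝ) (T : Matrix (Fin n) (Fin m) ℝ) (i : Fin n) :
    appendSlackCol p T i (Fin.last m) = p - ∑ j, T i j :=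
  Fin.snoc_last ..

lemma restrictCols_appendSlackCol (p : ℝ) (T : Matrix (Fin n) (Fin m) ℝ) :
    restrictCols n m (appendSlackCol p T) = T := by
  funext i j
  exact appendSlackCol_castSucc p T i j

lemma appendSlackCol_mem_TpolyHat (hn : n ≠ 0) {T : Matrix (Fin n) (Fin m) ℝ}
    (hT : T ∈ Tpartial n m) : appendSlackCol (1 / (n : ℝ)) T ∈ TpolyHat n m := by
  have hcol := Tpartial_colSum_eq hT
  obtain ⟨hnonneg, hrow, -, htotal⟩ := hT
  refine ⟨fun i j => ?_, fun i => ?_, fun j => ?_⟩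
  · induction j using Fin.lastCases with
    | cast j => simpa using hnonneg i j
    | last => simpa using hrow i
  · simp [Fin.sum_univ_castSucc]
  · induction j using Fin.lastCases with
    | cast j => simpa using hcol j
    | last =>
      simp only [appendSlackCol_last, Fin.snoc_last, sum_sub_distrib, htotal, sum_const,
        card_univ, Fintype.card_fin, nsmul_eq_mul]
      field_simp

lemma restrictCols_surjOn (hn : n ≠ 0) :
    Set.SurjOn (restrictCols n m) (TpolyHat n m) (Tpartial n m) := fun T hT =>
  ⟨appendSlackCol (1 / (n : ℝ)) T, appendSlackCol_mem_TpolyHat hn hT,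
    restrictCols_appendSlackCol _ T⟩

lemma restrictCols_bijOn (hn : n ≠ 0) :
    Set.BijOn (restrictCols n m) (TpolyHat n m) (Tpartial n m) :=
  ⟨restrictCols_mapsTo, restrictCols_injOn, restrictCols_surjOn hn⟩

end Transport

section Objective

variable {n m : ℕ} (L : Fin n → Fin n → Fin m → Fin m → ℝ) (i i' : Fin n)

@[simp]
lemma Lhat_castSucc_castSucc (j j' : Fin m) :
    Lhat n m L i i' j.castSucc j'.castSucc = L i i' j j' := by
  simp [Lhat]

@[simp]
lemma Lhat_last_left (j' : Fin (m + 1)) : Lhat n m L i i' (Fin.last m) j' = 0 := by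
  simp [Lhat]

@[simp]
lemma Lhat_last_right (j : Fin (m + 1)) : Lhat n m L i i' j (Fin.last m) = 0 := by
  simp [Lhat]

@[simp]
lemma Mhat_castSucc (M : Matrix (Fin n) (Fin m) ℝ) (j : Fin m) :
    Mhat n m M i j.castSucc = M i j :=
  Fin.snoc_castSucc ..

@[simp]
lemma Mhat_last (M : Matrix (Fin n) (Fin m) ℝ) : Mhat n m M i (Fin.last m) = 0 :=
  Fin.snoc_last ..

lemma objHat_eq_objPart_restrictCols (α : ℝ) (M : Matrix (Fin n) (Fin m) ℝ)
    (That : Matrix (Fin n) (Fin (m + 1)) ℝ) :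
    objHat n m α M L That = objPart n m α M L (restrictCols n m That) := by
  simp [objHat, objPart, Fin.sum_univ_castSucc, restrictCols]

end Objective

theorem stmt_8_general (n m : ℕ) (hmn : m < n)
    (α : ℝ)
    (M : Matrix (Fin n) (Fin m) ℝ)
    (L : Fin n → Fin n → Fin m → Fin m → ℝ) :
    Set.BijOn (restrictCols n m) (TpolyHat n m)
      {T | T ∈ Tpartial n m ∧ ∀ j, ∑ i, T i j = 1 / (n : ℝ)} ∧
    (∀ That ∈ TpolyHat n m,
      objHat n m α M L That = objPart n m α M L (restrictCols n m That)) ∧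
    sInf (objHat n m α M L '' TpolyHat n m) = sInf (objPart n m α M L '' Tpartial n m) := by
  have hbij := restrictCols_bijOn (m := m) (Nat.ne_zero_of_lt hmn)
  have htarget : {T | T ∈ Tpartial n m ∧ ∀ j, ∑ i, T i j = 1 / (n : ℝ)} = Tpartial n m :=
    Set.sep_eq_self_iff_mem_true.mpr fun _ => Tpartial_colSum_eq
  have hobj : objHat n m α M L = objPart n m α M L ∘ restrictCols n m :=
    funext (objHat_eq_objPart_restrictCols L α M)
  refine ⟨htarget.symm ▸ hbij, fun That _ => congrFun hobj That, ?_⟩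
  rw [hobj, Set.image_comp, hbij.image_eq]

/-- restriction to the first m columns is a bijection from 𝒯(p, q̂) onto
𝒯_{m/n}(p,q) ∩ {Tᵀ1 = q}, preserves the objective, and consequently the minima of the
augmented and partial fused Gromov-Wasserstein problems coincide. -/
theorem stmt_8 (n m : ℕ) (hm : 0 < m) (hmn : m < n)
    (α : ℝ) (hα : α ∈ Set.Icc (0 : ℝ) 1)
    (M : Matrix (Fin n) (Fin m) ℝ)
    (L : Fin n → Fin n → Fin m → Fin m → ℝ) :
    Set.BijOn (restrictCols n m) (TpolyHat n m)
      {T | T ∈ Tpartial n m ∧ ∀ j, ∑ i, T i j = 1 / (n : ℝ)} ∧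
    (∀ That ∈ TpolyHat n m,
      objHat n m α M L That = objPart n m α M L (restrictCols n m That)) ∧
    sInf (objHat n m α M L '' TpolyHat n m) = sInf (objPart n m α M L '' Tpartial n m) :=
  stmt_8_general n m hmn α M L
end

section
/- The Jaccard dissimilarity d(A,B) = 1 − |A ∩ B|/|A ∪ B| on nonempty finite sets is a metric: it is nonnegative, symmetric, vanishes iff A = B, and satisfies the triangle inequality d(A,C) ≤ d(A,B) + d(B,C). -/
lemma sd_card {α : Type*} [DecidableEq α] (X Y : Finset α) :
    ((symmDiff X Y).card : ℝ) = (X ∪ Y).card - (X ∩ Y).card := by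
  have h := Finset.card_union_of_disjoint (disjoint_symmDiff_inf X Y)
  have h2 : symmDiff X Y ∪ (X ∩ Y) = X ∪ Y := symmDiff_sup_inf X Y
  have h3 : (X ∪ Y).card = (symmDiff X Y).card + (X ∩ Y).card := by
    rw [← h2]; exact h
  push_cast [h3]; ring

lemma sd_tri {α : Type*} [DecidableEq α] (X Y Z : Finset α) :
    ((symmDiff X Z).card : ℝ) ≤ (symmDiff X Y).card + (symmDiff Y Z).card := by
  have := Finset.card_le_card (α := α) (symmDiff_triangle X Y Z)
  have h2 := Finset.card_union_le (symmDiff X Y) (symmDiff Y Z)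
  push_cast
  exact_mod_cast le_trans this h2

lemma card_le_sd {α : Type*} [DecidableEq α] (X Y : Finset α) :
    (Y.card : ℝ) ≤ (symmDiff X Y).card + X.card := by
  have hsub : Y ⊆ symmDiff X Y ∪ X := by
    intro x hx
    by_cases hxA : x ∈ X
    · exact Finset.mem_union_right _ hxA
    · exact Finset.mem_union_left _ (by simp [Finset.mem_symmDiff, hx, hxA])
  have := (Finset.card_le_card hsub).trans (Finset.card_union_le _ _)
  exact_mod_cast this

/-- the Jaccard dissimilarity d(A,B) = 1 − |A ∩ B|/|A ∪ B| on nonempty finite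
sets is nonnegative, symmetric, vanishes iff A = B, and satisfies the triangle inequality. -/
theorem stmt_12 {α : Type*} [DecidableEq α] (A B C : Finset α)
    (hA : A.Nonempty) (hB : B.Nonempty) (hC : C.Nonempty) :
    0 ≤ 1 - ((A ∩ B).card : ℝ) / (A ∪ B).card ∧
    1 - ((A ∩ B).card : ℝ) / (A ∪ B).card = 1 - ((B ∩ A).card : ℝ) / (B ∪ A).card ∧
    (1 - ((A ∩ B).card : ℝ) / (A ∪ B).card = 0 ↔ A = B) ∧
    1 - ((A ∩ C).card : ℝ) / (A ∪ C).card ≤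
      (1 - ((A ∩ B).card : ℝ) / (A ∪ B).card) + (1 - ((B ∩ C).card : ℝ) / (B ∪ C).card) := by
  have hnAB : (0:ℝ) < (A ∪ B).card := by
    exact_mod_cast Finset.card_pos.2 (hA.mono Finset.subset_union_left)
  have hnBC : (0:ℝ) < (B ∪ C).card := by
    exact_mod_cast Finset.card_pos.2 (hB.mono Finset.subset_union_left)
  have hnAC : (0:ℝ) < (A ∪ C).card := by
    exact_mod_cast Finset.card_pos.2 (hA.mono Finset.subset_union_left)
  have hiAB : ((A ∩ B).card : ℝ) ≤ (A ∪ B).card := by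
    exact_mod_cast Finset.card_le_card (Finset.inter_subset_left.trans Finset.subset_union_left)
  refine ⟨?_, ?_, ?_, ?_⟩
  · have := div_le_one_of_le₀ hiAB hnAB.le
    linarith
  · rw [Finset.inter_comm, Finset.union_comm]
  · constructor
    · intro h
      have h1 : ((A ∩ B).card : ℝ) = (A ∪ B).card := by
        field_simp at h; linarith
      have h2 : (A ∪ B).card ≤ (A ∩ B).card := by exact_mod_cast h1.ge
      have h3 : A ∩ B = A ∪ B :=
        Finset.eq_of_subset_of_card_le
          (Finset.inter_subset_left.trans Finset.subset_union_left) h2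
      apply Finset.Subset.antisymm
      · exact (Finset.subset_union_left.trans (le_of_eq h3.symm)).trans Finset.inter_subset_right
      · exact (Finset.subset_union_right.trans (le_of_eq h3.symm)).trans Finset.inter_subset_left
    · rintro rfl
      rw [Finset.inter_self, Finset.union_self, div_self (by positivity)]
      ring
  · -- triangle inequality
    set p : ℝ := ((symmDiff A B).card : ℝ) with hp
    set q : ℝ := ((symmDiff B C).card : ℝ) with hq
    set r : ℝ := ((symmDiff A C).card : ℝ) with hr
    have hpe : p = (A ∪ B).card - (A ∩ B).card := sd_card A B
    have hqe : q = (B ∪ C).card - (B ∩ C).card := sd_card B C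
    have hre : r = (A ∪ C).card - (A ∩ C).card := sd_card A C
    have hp0 : 0 ≤ p := by positivity
    have hq0 : 0 ≤ q := by positivity
    have hr0 : 0 ≤ r := by positivity
    have htri : r ≤ p + q := sd_tri A B C
    -- sizes
    have h2AB : 2 * ((A ∪ B).card : ℝ) = p + A.card + B.card := by
      have := Finset.card_inter_add_card_union A B
      have : ((A ∩ B).card : ℝ) + (A ∪ B).card = A.card + B.card := by exact_mod_cast this
      linarith [hpe]
    have h2BC : 2 * ((B ∪ C).card : ℝ) = q + B.card + C.card := by
      have := Finset.card_inter_add_card_union B C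
      have : ((B ∩ C).card : ℝ) + (B ∪ C).card = B.card + C.card := by exact_mod_cast this
      linarith [hqe]
    have h2AC : 2 * ((A ∪ C).card : ℝ) = r + A.card + C.card := by
      have := Finset.card_inter_add_card_union A C
      have : ((A ∩ C).card : ℝ) + (A ∪ C).card = A.card + C.card := by exact_mod_cast this
      linarith [hre]
    have hB1 : (B.card : ℝ) ≤ p + A.card := card_le_sd A B
    have hB2 : (B.card : ℝ) ≤ q + C.card := by
      have := card_le_sd C B
      have hcomm : ((symmDiff C B).card : ℝ) = q := by rw [symmDiff_comm]
      linarith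
    set S : ℝ := p + q + (A.card : ℝ) + C.card with hS
    have hSpos : 0 < S := by nlinarith
    have step1 : r / (A ∪ C).card ≤ 2 * (p + q) / S := by
      rw [div_le_div_iff₀ hnAC hSpos]
      have hAC0 : (0:ℝ) ≤ (A.card : ℝ) + C.card := by positivity
      have hprod := mul_nonneg (by linarith : (0:ℝ) ≤ p + q - r) hAC0
      have e : 2 * (p + q) * ((A ∪ C).card : ℝ) - r * S
          = (p + q - r) * ((A.card : ℝ) + C.card) := by
        rw [hS]; linear_combination (p + q) * h2AC
      linarith
    have step2 : 2 * p / S ≤ p / (A ∪ B).card := by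
      rw [div_le_div_iff₀ hSpos hnAB]
      have hprod := mul_nonneg hp0 (by linarith : (0:ℝ) ≤ q + (C.card:ℝ) - B.card)
      have e : p * S - 2 * p * ((A ∪ B).card : ℝ)
          = p * (q + (C.card:ℝ) - B.card) := by
        rw [hS]; linear_combination (-p) * h2AB
      linarith
    have step3 : 2 * q / S ≤ q / (B ∪ C).card := by
      rw [div_le_div_iff₀ hSpos hnBC]
      have hprod := mul_nonneg hq0 (by linarith : (0:ℝ) ≤ p + (A.card:ℝ) - B.card)
      have e : q * S - 2 * q * ((B ∪ C).card : ℝ)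
          = q * (p + (A.card:ℝ) - B.card) := by
        rw [hS]; linear_combination (-q) * h2BC
      linarith
    have key : r / (A ∪ C).card ≤ p / (A ∪ B).card + q / (B ∪ C).card := by
      have : 2 * (p + q) / S = 2 * p / S + 2 * q / S := by ring
      linarith [step1, step2, step3, this ▸ step1]
    have e1 : 1 - ((A ∩ C).card : ℝ) / (A ∪ C).card = r / (A ∪ C).card := by
      rw [hre, sub_div, div_self hnAC.ne']
    have e2 : 1 - ((A ∩ B).card : ℝ) / (A ∪ B).card = p / (A ∪ B).card := by
      rw [hpe, sub_div, div_self hnAB.ne']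
    have e3 : 1 - ((B ∩ C).card : ℝ) / (B ∪ C).card = q / (B ∪ C).card := by
      rw [hqe, sub_div, div_self hnBC.ne']
    rw [e1, e2, e3]; exact key
end
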